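/- With A^(i) defined recursively by A^(0) = I_{n^{k-1}} (as an n^{k-1}×n^{k-1}×1 tensor) and A^(i+1) the block tensor with characteristic matrix [[A^(i)(s), A^(i)(t)],[A^(i)(t), 0]] in disjoint indeterminates s, t, one has R[A^(i)] ≥ n^{k-1} + 2(2^i − 1)n^{k-1} for all i ≥ 0. -/

import Mathlib

open scoped BigOperators

noncomputable def tRank (F : Type) [Field F] {I J K : Type} [Fintype I] [Fintype J] [Fintype K]
    (A : I → J → K → F) : ℕ :=
  sInf {m | ∃ x : Fin m → I → F, ∃ y : Fin m → J → F, ∃ z : Fin m → K → F,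
    ∀ i j k, A i j k = ∑ t, x t i * y t j * z t k}

/-- Row/column index type of the recursive tensor `A^(i)`. -/
def ArecIdx (m : ℕ) : ℕ → Type
  | 0 => Fin m
  | (i+1) => Fin 2 × ArecIdx m i

/-- Slice index type of the recursive tensor `A^(i)`. -/
def ArecSl : ℕ → Type
  | 0 => Fin 1
  | (i+1) => Fin 2 × ArecSl i

instance instArecIdxFintype (m : ℕ) : (i : ℕ) → Fintype (ArecIdx m i)
  | 0 => inferInstanceAs (Fintype (Fin m))
  | (i+1) => @instFintypeProd _ _ _ (instArecIdxFintype m i)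

instance instArecSlFintype : (i : ℕ) → Fintype (ArecSl i)
  | 0 => inferInstanceAs (Fintype (Fin 1))
  | (i+1) => @instFintypeProd _ _ _ (instArecSlFintype i)

instance instArecIdxDecEq (m : ℕ) : (i : ℕ) → DecidableEq (ArecIdx m i)
  | 0 => inferInstanceAs (DecidableEq (Fin m))
  | (i+1) => @instDecidableEqProd _ _ _ (instArecIdxDecEq m i)

/-- The recursive tensor: `A^(0) = I_m` (one slice), and
`A^(i+1) = [[A^(i)(s), A^(i)(t)], [A^(i)(t), 0]]`, where the first component of the
slice index chooses between the `s`-variables (`0`) and the `t`-variables (`1`). -/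
def Arec (F : Type) [Field F] (m : ℕ) : (i : ℕ) → ArecIdx m i → ArecIdx m i → ArecSl i → F
  | 0 => fun r c _ => if r = c then (1 : F) else 0
  | (i+1) => fun rc cc el =>
      if el.1 = 0 then
        (if rc.1 = 0 ∧ cc.1 = 0 then Arec F m i rc.2 cc.2 el.2 else 0)
      else
        (if (rc.1 = 0 ∧ cc.1 = 1) ∨ (rc.1 = 1 ∧ cc.1 = 0) then Arec F m i rc.2 cc.2 el.2 else 0)

/-!
Substitution method. If the rows `u` of a tensor `A` are linearly independent, then in an
optimal decomposition `A = ∑ₜ xₜ ⊗ yₜ ⊗ zₜ` the vectors `xₜ ∘ u` span `I₁ → F`, so `#I₁` of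
them form a basis; adding to every row the linear combination of the rows `u` that cancels
`xₜ` on that basis kills `#I₁` summands, so the rank drops by at least `#I₁`. Eliminating in
this way the last block row and, after transposing, the last block column of
`[[A(s), A(t)], [A(t), 0]]` and then keeping only the `s`-slices gives
`R[A^(i+1)] ≥ 2 · 2^i m + R[A^(i)]`, because the rows and the columns of `A^(i)` are linearly
independent. The same argument gives `R[I_m] ≥ m`, and the recurrence sums to the bound.
-/

section LinearAlgebra

variable {F : Type} [Field F]

theorem exists_finset_card_eq_finrank_linearMap_apply_eq {V W ι : Type*} [AddCommGroup V]
    [Module F V] [FiniteDimensional F V] [AddCommGroup W] [Module F W] (v : ι → V)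
    (hv : Submodule.span F (Set.range v) = ⊤) (w : ι → W) :
    ∃ s : Finset ι, s.card = Module.finrank F V ∧ ∃ Φ : V →ₗ[F] W, ∀ t ∈ s, Φ (v t) = w t := by
  obtain ⟨κ, a, ha, hspan, hli⟩ := exists_linearIndependent' F v
  have : Fintype κ := @Fintype.ofFinite κ hli.finite
  let B := Module.Basis.mk hli (by rw [hspan, hv])
  refine ⟨Finset.univ.map ⟨a, ha⟩, by simp [Module.finrank_eq_card_basis B],
    B.constr F (w ∘ a), ?_⟩
  simp only [Finset.mem_map, Finset.mem_univ, true_and, Function.Embedding.coeFn_mk]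
  rintro _ ⟨c, rfl⟩
  simpa [B] using B.constr_basis F (w ∘ a) c

theorem linearIndependent_of_comp_apply {ι J K J' K' : Type} {U : ι → J → K → F}
    (f : J' → J) (g : K' → K) (h : LinearIndependent F fun a j k => U a (f j) (g k)) :
    LinearIndependent F U :=
  h.of_comp
    { toFun := fun V j k => V (f j) (g k)
      map_add' := fun _ _ => rfl
      map_smul' := fun _ _ => rfl }

theorem span_range_eq_top_of_linearIndependent {I J K τ : Type} [Fintype I] [Fintype τ]
    {A : I → J → K → F} (x : τ → I → F) (y : τ → J → F) (z : τ → K → F)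
    (hA : ∀ i j k, A i j k = ∑ t, x t i * y t j * z t k) (hli : LinearIndependent F A) :
    Submodule.span F (Set.range x) = ⊤ := by
  let M : Matrix τ I F := Matrix.of x
  have hinj : Function.Injective M.mulVecLin := by
    rw [← LinearMap.ker_eq_bot, LinearMap.ker_eq_bot']
    intro b hb
    have hsum : ∑ i, b i • A i = 0 := by
      ext j k
      simp only [Finset.sum_apply, Pi.smul_apply, smul_eq_mul, Pi.zero_apply]
      calc ∑ i, b i * A i j k = ∑ t, M.mulVecLin b t * y t j * z t k := by
            simp only [hA, Matrix.mulVecLin_apply, Matrix.mulVec, dotProduct, Finset.mul_sum,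
              Finset.sum_mul]
            rw [Finset.sum_comm]
            exact Finset.sum_congr rfl fun t _ => Finset.sum_congr rfl fun i _ => by
              simp only [M, Matrix.of_apply]; ring
        _ = 0 := by simp [hb]
    exact funext (Fintype.linearIndependent_iff.1 hli b hsum)
  have hrank := Matrix.rank_eq_finrank_span_row M
  rw [Matrix.rank, LinearMap.finrank_range_of_inj hinj] at hrank
  exact Submodule.eq_top_of_finrank_eq hrank.symm

end LinearAlgebra

section TensorRank

variable {F : Type} [Field F] {I J K τ : Type} [Fintype τ]

theorem exists_fin_decomp {A : I → J → K → F} (x : τ → I → F) (y : τ → J → F) (z : τ → K → F)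
    (hA : ∀ i j k, A i j k = ∑ t, x t i * y t j * z t k) :
    ∃ (x' : Fin (Fintype.card τ) → I → F) (y' : Fin (Fintype.card τ) → J → F)
      (z' : Fin (Fintype.card τ) → K → F), ∀ i j k, A i j k = ∑ t, x' t i * y' t j * z' t k := by
  let e := (Fintype.equivFin τ).symm
  refine ⟨x ∘ e, y ∘ e, z ∘ e, fun i j k => ?_⟩
  rw [hA, ← e.sum_comp]
  rfl

variable [Fintype I] [Fintype J] [Fintype K]

theorem tRank_le_card {A : I → J → K → F} (x : τ → I → F) (y : τ → J → F) (z : τ → K → F)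
    (hA : ∀ i j k, A i j k = ∑ t, x t i * y t j * z t k) : tRank F A ≤ Fintype.card τ :=
  Nat.sInf_le (exists_fin_decomp x y z hA)

theorem tRank_le_card_sub [DecidableEq τ] {A : I → J → K → F} (x : τ → I → F) (y : τ → J → F)
    (z : τ → K → F) (hA : ∀ i j k, A i j k = ∑ t, x t i * y t j * z t k) (s : Finset τ)
    (hs : ∀ t ∈ s, x t = 0) : tRank F A ≤ Fintype.card τ - s.card := by
  rw [← Finset.card_compl, ← Fintype.card_coe]
  refine tRank_le_card (fun t : ↥sᶜ => x t) (fun t => y t) (fun t => z t) fun i j k => ?_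
  rw [hA, Finset.sum_coe_sort sᶜ (fun t => x t i * y t j * z t k)]
  refine (Finset.sum_subset (Finset.subset_univ _) fun t _ ht => ?_).symm
  simp [hs t (by simpa using ht)]

theorem exists_decomp_tRank (A : I → J → K → F) :
    ∃ (x : Fin (tRank F A) → I → F) (y : Fin (tRank F A) → J → F) (z : Fin (tRank F A) → K → F),
      ∀ i j k, A i j k = ∑ t, x t i * y t j * z t k := by
  classical
  have h := exists_fin_decomp (A := A) (fun (p : I × J) i => if p.1 = i then 1 else 0)
    (fun p j => if p.2 = j then 1 else 0) (fun p => A p.1 p.2) fun i j k => by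
      simp [Fintype.sum_prod_type, ite_mul]
  exact Nat.sInf_mem (s := {m | ∃ (x : Fin m → I → F) (y : Fin m → J → F) (z : Fin m → K → F),
    ∀ i j k, A i j k = ∑ t, x t i * y t j * z t k}) ⟨_, h⟩

theorem tRank_comp_le {I' J' K' : Type} [Fintype I'] [Fintype J'] [Fintype K']
    (A : I → J → K → F) (f : I' → I) (g : J' → J) (h : K' → K) :
    tRank F (fun i j k => A (f i) (g j) (h k)) ≤ tRank F A := by
  obtain ⟨x, y, z, hA⟩ := exists_decomp_tRank A
  simpa using tRank_le_card (fun t i => x t (f i)) (fun t j => y t (g j)) (fun t k => z t (h k))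
    fun i j k => hA _ _ _

theorem tRank_swap_le (A : I → J → K → F) : tRank F (fun j i k => A i j k) ≤ tRank F A := by
  obtain ⟨x, y, z, hA⟩ := exists_decomp_tRank A
  simpa using tRank_le_card y x z fun j i k => by simp only [hA, mul_comm (x _ i)]

theorem exists_linearMap_card_add_tRank_le_of_rows {I₁ : Type} [Fintype I₁] (A : I → J → K → F)
    (u : I₁ → I) (hu : LinearIndependent F fun a => A (u a)) :
    ∃ Φ : (I₁ → F) →ₗ[F] (I → F), Fintype.card I₁ +
      tRank F (fun i j k => A i j k + Φ (fun a => A (u a) j k) i) ≤ tRank F A := by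
  classical
  obtain ⟨x, y, z, hA⟩ := exists_decomp_tRank A
  let v : Fin (tRank F A) → I₁ → F := fun t a => x t (u a)
  obtain ⟨s, hs, Φ, hΦ⟩ := exists_finset_card_eq_finrank_linearMap_apply_eq v
    (span_range_eq_top_of_linearIndependent v y z (fun a j k => hA (u a) j k) hu) (fun t => -x t)
  refine ⟨Φ, ?_⟩
  have hrows : ∀ j k, (fun a => A (u a) j k) = ∑ t, (y t j * z t k) • v t := by
    intro j k
    ext a
    simp only [hA, v, Finset.sum_apply, Pi.smul_apply, smul_eq_mul]
    exact Finset.sum_congr rfl fun t _ => by ring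
  have hdecomp : ∀ i j k, A i j k + Φ (fun a => A (u a) j k) i =
      ∑ t, (x t + Φ (v t)) i * y t j * z t k := by
    intro i j k
    rw [hrows, map_sum, hA, Finset.sum_apply, ← Finset.sum_add_distrib]
    refine Finset.sum_congr rfl fun t _ => ?_
    simp only [map_smul, Pi.smul_apply, Pi.add_apply, smul_eq_mul]
    ring
  have hrank := tRank_le_card_sub _ y z hdecomp s fun t ht => by simp [hΦ t ht]
  rw [Module.finrank_fintype_fun_eq_card] at hs
  have hle := s.card_le_univ
  simp only [Fintype.card_fin] at hrank hle
  omega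

theorem exists_linearMap_card_add_tRank_le_of_cols {J₁ : Type} [Fintype J₁] (A : I → J → K → F)
    (v : J₁ → J) (hv : LinearIndependent F fun b i k => A i (v b) k) :
    ∃ Ψ : (J₁ → F) →ₗ[F] (J → F), Fintype.card J₁ +
      tRank F (fun i j k => A i j k + Ψ (fun b => A i (v b) k) j) ≤ tRank F A := by
  obtain ⟨Ψ, hΨ⟩ := exists_linearMap_card_add_tRank_le_of_rows (fun j i k => A i j k) v hv
  exact ⟨Ψ, (add_le_add_right (tRank_swap_le _) _).trans (hΨ.trans (tRank_swap_le A))⟩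

theorem card_le_tRank_of_linearIndependent {A : I → J → K → F} (hA : LinearIndependent F A) :
    Fintype.card I ≤ tRank F A := by
  obtain ⟨Φ, hΦ⟩ := exists_linearMap_card_add_tRank_le_of_rows A id hA
  omega

theorem card_add_card_add_tRank_le_tRank {K₀ : Type} [Fintype K₀]
    (T : Fin 2 × I → Fin 2 × J → K → F) (ι : K₀ → K)
    (hzero : ∀ i j k, T (1, i) (1, j) k = 0)
    (hB : ∀ i j k, T (0, i) (1, j) (ι k) = 0) (hC : ∀ i j k, T (1, i) (0, j) (ι k) = 0)
    (hrows : LinearIndependent F fun i => T (1, i))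
    (hcols : LinearIndependent F fun j p k => T p (1, j) k) :
    Fintype.card I + Fintype.card J + tRank F (fun i j k => T (0, i) (0, j) (ι k)) ≤
      tRank F T := by
  obtain ⟨Φ, hΦ⟩ := exists_linearMap_card_add_tRank_le_of_rows T (fun i => (1, i)) hrows
  set T₁ := fun p q k => T p q k + Φ (fun i => T (1, i) q k) p
  have hT₁ : ∀ p j k, T₁ p (1, j) k = T p (1, j) k := fun p j k => by
    simp [T₁, hzero, ← Pi.zero_def]
  obtain ⟨Ψ, hΨ⟩ := exists_linearMap_card_add_tRank_le_of_cols T₁ (fun j => (1, j))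
    (by simpa only [hT₁] using hcols)
  have hcorner : (fun i j k => T (0, i) (0, j) (ι k)) =
      fun i j k => T₁ (0, i) (0, j) (ι k) + Ψ (fun j' => T₁ (0, i) (1, j') (ι k)) (0, j) := by
    ext i j k
    simp [T₁, hzero, hB, hC, ← Pi.zero_def]
  have hsub := tRank_comp_le (fun p q k => T₁ p q k + Ψ (fun j' => T₁ p (1, j') k) q)
    (fun i => (0, i)) (fun j => (0, j)) ι
  rw [← hcorner] at hsub
  omega

end TensorRank

section Arec

variable (F : Type) [Field F] (m : ℕ)

theorem card_arecIdx : ∀ i, Fintype.card (ArecIdx m i) = 2 ^ i * m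
  | 0 => (Fintype.card_fin m).trans (one_mul m).symm
  | i + 1 => (Fintype.card_prod (Fin 2) (ArecIdx m i)).trans <| by
    rw [Fintype.card_fin, card_arecIdx i, pow_succ]
    ring

theorem sum_arecIdx_succ {M : Type*} [AddCommMonoid M] (i : ℕ) (f : ArecIdx m (i + 1) → M) :
    ∑ p, f p = ∑ r, f (0, r) + ∑ r, f (1, r) :=
  (Fintype.sum_prod_type (f := f)).trans (Fin.sum_univ_two _)

theorem arec_comm : ∀ i r c e, Arec F m i c r e = Arec F m i r c e
  | 0, r, c, e => by simp [Arec, eq_comm]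
  | i + 1, r, c, e => by simp [Arec, arec_comm i, and_comm, or_comm]

theorem linearIndependent_arec : ∀ i, LinearIndependent F (Arec F m i)
  | 0 => by
    obtain ⟨e⟩ : Nonempty (ArecSl 0) := ⟨(0 : Fin 1)⟩
    rw [Fintype.linearIndependent_iff]
    intro g hg r
    simpa [Arec, Finset.sum_apply] using congrFun (congrFun hg r) e
  | i + 1 => by
    have ih := Fintype.linearIndependent_iff.1 (linearIndependent_arec i)
    rw [Fintype.linearIndependent_iff]
    intro g hg
    have hcoord : ∀ q w, ∑ p, g p * Arec F m (i + 1) p q w = 0 := fun q w => by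
      simpa [Finset.sum_apply] using congrFun (congrFun hg q) w
    have htop := ih (fun r => g (0, r)) <| funext fun c => funext fun e => by
      simpa [sum_arecIdx_succ, Arec, Finset.sum_apply] using hcoord (1, c) (1, e)
    have hbot := ih (fun r => g (1, r)) <| funext fun c => funext fun e => by
      simpa [sum_arecIdx_succ, Arec, Finset.sum_apply] using hcoord (0, c) (1, e)
    rintro ⟨a, r⟩
    fin_cases a
    exacts [htop r, hbot r]

theorem card_add_card_add_tRank_arec_le (i : ℕ) :
    2 ^ i * m + 2 ^ i * m + tRank F (Arec F m i) ≤ tRank F (Arec F m (i + 1)) := by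
  have hcols : LinearIndependent F fun c r e => Arec F m i r c e := by
    convert linearIndependent_arec F m i using 1
    ext c r e
    exact arec_comm F m i c r e
  have h := card_add_card_add_tRank_le_tRank (Arec F m (i + 1)) (fun e => (0, e))
    (fun r c ⟨a, e⟩ => by fin_cases a <;> rfl) (fun _ _ _ => rfl) (fun _ _ _ => rfl)
    (linearIndependent_of_comp_apply (fun c => (0, c)) (fun e => (1, e))
      (linearIndependent_arec F m i))
    (linearIndependent_of_comp_apply (fun r => (0, r)) (fun e => (1, e)) hcols)
  rw [card_arecIdx] at h
  exact h

theorem two_pow_succ_mul_le_tRank_arec_add (i : ℕ) :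
    2 ^ (i + 1) * m ≤ tRank F (Arec F m i) + m := by
  induction i with
  | zero =>
    have h := card_le_tRank_of_linearIndependent (linearIndependent_arec F m 0)
    rw [card_arecIdx] at h
    simpa [two_mul] using h
  | succ i ih =>
    have h := card_add_card_add_tRank_arec_le F m i
    rw [pow_succ] at ih
    rw [pow_succ, pow_succ]
    linarith

end Arec

theorem arec_rank_lower_bound (F : Type) [Field F] (n k : ℕ) (i : ℕ) :
    n ^ (k - 1) + 2 * (2 ^ i - 1) * n ^ (k - 1) ≤ tRank F (Arec F (n ^ (k - 1)) i) := by
  have h := two_pow_succ_mul_le_tRank_arec_add F (n ^ (k - 1)) i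
  have hpos : 1 ≤ 2 ^ i := Nat.one_le_two_pow
  zify [hpos] at h ⊢
  rw [pow_succ] at h
  linarith
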